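/- Let L : ι → ℝ and let p : ι → ℝ be any price vector such that for every utility vector u : ι → ℝ with u i ≥ L i for all i, every user-optimal decision for (p, u) has social welfare equal to max(max_{i}(u i − c i), 0). Then for every such u and every user-optimal decision d for (p, u), the profit of d is at most (max_{j ∈ ι}(L j − c j))⁺, where x⁺ = max(x, 0). (Paper's Theorem 4, maximality part: (max_{i,j}{L_{i,j} − v_{i,j} + v_{−k}})⁺ is the maximum possible profit of any pricing that maximizes the ex-post social welfare for all realizations of the utilities.) -/
import Mathlib


open Finset

/-- A decision `d` is user-optimal for prices `p` and utilities `u`. -/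
def userOptimal {ι : Type*} [Fintype ι] (p u : ι → ℝ) : Option ι → Prop
  | some i => 0 ≤ u i - p i ∧ ∀ j, u j - p j ≤ u i - p i
  | none => ∀ j, u j - p j < 0

/-- Social welfare of a decision: `u i - c i` if option `i` is accepted, `0` otherwise. -/
def welfare {ι : Type*} (c u : ι → ℝ) : Option ι → ℝ
  | some i => u i - c i
  | none => 0

/-- Profit of a decision: `p i - c i` if option `i` is accepted, `0` otherwise. -/
def profit {ι : Type*} (p c : ι → ℝ) : Option ι → ℝ
  | some i => p i - c i
  | none => 0

/-- For every price and utility vector there exists a user-optimal decision. -/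
lemma exists_userOptimal {ι : Type*} [Fintype ι] [Nonempty ι] (p u : ι → ℝ) :
    ∃ d : Option ι, userOptimal p u d := by
  obtain ⟨i, -, hi⟩ := Finset.exists_max_image (Finset.univ : Finset ι)
    (fun j => u j - p j) ⟨Classical.arbitrary ι, Finset.mem_univ _⟩
  rcases le_or_gt 0 (u i - p i) with h | h
  · exact ⟨some i, h, fun j => hi j (Finset.mem_univ j)⟩
  · exact ⟨none, fun j => lt_of_le_of_lt (hi j (Finset.mem_univ j)) h⟩

/-- Maximality part of the paper's Theorem 4: if a price vector `p` maximizes the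
ex-post social welfare for every utility realization `u ≥ L`, then its profit on any
such realization is at most `(max_j (L j - c j))⁺`. -/
theorem lower_endpoint_profit_is_max {ι : Type*} [Fintype ι] [Nonempty ι]
    (c L p : ι → ℝ)
    (hwelfare : ∀ u : ι → ℝ, (∀ i, L i ≤ u i) → ∀ d : Option ι, userOptimal p u d →
      welfare c u d = max (univ.sup' univ_nonempty (fun i => u i - c i)) 0) :
    ∀ u : ι → ℝ, (∀ i, L i ≤ u i) → ∀ d : Option ι, userOptimal p u d →
      profit p c d ≤ max (univ.sup' univ_nonempty (fun j => L j - c j)) 0 := by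
  classical
  set M := max (univ.sup' univ_nonempty (fun j => L j - c j)) 0 with hM
  intro u hu d hd
  match d with
  | none => simp [profit, hM]
  | some i =>
    show p i - c i ≤ M
    -- key step: for any t with L i ≤ t < p i, we have t - c i ≤ M
    have key : ∀ t : ℝ, L i ≤ t → t < p i → t - c i ≤ M := by
      intro t hLt htp
      set v : ι → ℝ := Function.update L i t with hv
      have hv_i : v i = t := Function.update_self i t L
      have hvL : ∀ j, L j ≤ v j := by
        intro j
        by_cases hji : j = i
        · subst hji; rw [hv_i]; exact hLt
        · rw [hv, Function.update_of_ne hji]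
      obtain ⟨d', hd'⟩ := exists_userOptimal p v
      have hw := hwelfare v hvL d' hd'
      have hsup : v i - c i ≤ univ.sup' univ_nonempty (fun j => v j - c j) :=
        le_sup' (fun j => v j - c j) (mem_univ i)
      match d' with
      | none =>
        -- welfare 0 = max(sup, 0) so sup ≤ 0, hence t - c i ≤ 0 ≤ M
        have h0 : (0:ℝ) = max (univ.sup' univ_nonempty (fun j => v j - c j)) 0 := hw
        have : v i - c i ≤ 0 := by
          rcases max_eq_iff.mp h0.symm with ⟨-, -⟩ | ⟨-, hle⟩
          · exact le_trans hsup (by linarith [le_max_left (univ.sup' univ_nonempty (fun j => v j - c j)) (0:ℝ)])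
          · exact le_trans hsup (by linarith)
        rw [hv_i] at this
        have : t - c i ≤ 0 := this
        exact this.trans (le_max_right _ _)
      | some k =>
        have hki : k ≠ i := by
          intro hk
          subst hk
          have h1 : 0 ≤ v k - p k := hd'.1
          rw [hv_i] at h1
          linarith
        have hvk : v k = L k := by rw [hv, Function.update_of_ne hki]
        -- welfare = L k - c k = max(sup,0) ≥ t - c i
        have hw' : L k - c k = max (univ.sup' univ_nonempty (fun j => v j - c j)) 0 := by
          rw [← hvk]; exact hw
        have h2 : t - c i ≤ L k - c k := by
          rw [hw']
          refine le_trans ?_ (le_max_left _ _)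
          rw [← hv_i]; exact hsup
        have h3 : L k - c k ≤ M :=
          le_trans (le_sup' (fun j => L j - c j) (mem_univ k)) (le_max_left _ _)
        linarith
    rcases le_or_gt (p i) (L i) with h | h
    · have : L i - c i ≤ M :=
        le_trans (le_sup' (fun j => L j - c j) (mem_univ i)) (le_max_left _ _)
      linarith
    · refine le_of_forall_pos_le_add ?_
      intro ε hε
      have ht1 : L i ≤ max (L i) (p i - ε) := le_max_left _ _
      have ht2 : max (L i) (p i - ε) < p i := max_lt h (by linarith)
      have := key (max (L i) (p i - ε)) ht1 ht2
      have h4 : p i - ε ≤ max (L i) (p i - ε) := le_max_right _ _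
      linarith
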